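/- arXiv:2405.03269 — 3 statements merged into one kernel-verified Lean document; each statement's English description precedes it below -/
import Mathlib

section
/- Let (X, d) be a proper geodesic metric space and let ℓ be a D-contracting geodesic in X. Then for any x ∈ X, any y ∈ ℓ, and any nearest-point projection z ∈ π_ℓ(x), if d(y,z) > 2D then every geodesic [x,y] from x to y passes within distance 4D of z. More precisely, choosing w ∈ [y,z] with 2D < d(w,z) < 3D, one has d(w, [x,z]) > D for any geodesic [x,z], hence d(z, [x,y]) < 4D follows whenever geodesic triangles with one side on ℓ are D-slim. -/
open Set Metric

/-- `s` is (the image of) a geodesic segment from `a` to `b`. -/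
def IsGeodSeg {X : Type*} [MetricSpace X] (s : Set X) (a b : X) : Prop :=
  ∃ f : ℝ → X, f 0 = a ∧ f (dist a b) = b ∧
    (∀ u ∈ Set.Icc (0 : ℝ) (dist a b), ∀ v ∈ Set.Icc (0 : ℝ) (dist a b),
      dist (f u) (f v) = |u - v|) ∧
    f '' Set.Icc (0 : ℝ) (dist a b) = s

/-- `ℓ` is (the image of) a geodesic: an isometric image of an interval of `ℝ`. -/
def IsGeodesicSet {X : Type*} [MetricSpace X] (ℓ : Set X) : Prop :=
  ∃ (I : Set ℝ) (f : ℝ → X), I.OrdConnected ∧ f '' I = ℓ ∧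
    ∀ s ∈ I, ∀ t ∈ I, dist (f s) (f t) = |s - t|

/-- The set-valued nearest-point projection onto `ℓ`. -/
def projSet {X : Type*} [MetricSpace X] (ℓ : Set X) (x : X) : Set X :=
  {y ∈ ℓ | dist x y = Metric.infDist x ℓ}

/-- Every geodesic triangle with one side on `ℓ` is `δ`-slim. -/
def SlimOn {X : Type*} [MetricSpace X] (δ : ℝ) (ℓ : Set X) : Prop :=
  ∀ (x y z : X) (sxy syz szx : Set X),
    IsGeodSeg sxy x y → IsGeodSeg syz y z → IsGeodSeg szx z x → sxy ⊆ ℓ →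
    sxy ⊆ Metric.thickening δ (syz ∪ szx) ∧
    syz ⊆ Metric.thickening δ (szx ∪ sxy) ∧
    szx ⊆ Metric.thickening δ (sxy ∪ syz)

/-!
Let `w` be the point of `[z, x]` at distance `2δ` from `z` (if `d(x, z) ≤ 2δ`, the endpoint `x`
of `[x, y]` is already close to `z`). Since `z` is a nearest point of `ℓ` to `x` and `w` lies on a
geodesic from `z` to `x`, `z` is also a nearest point of `ℓ` to `w`, so `w` is at distance `2δ`
from `ℓ`. Slimness of the triangle `[y, z] ∪ [z, x] ∪ [x, y]`, whose side `[y, z]` is taken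
inside `ℓ`, puts `w` within `δ` of `[y, z] ∪ [x, y]`; it cannot be `[y, z]`, so some point of
`[x, y]` lies within `δ` of `w`, hence within `3δ` of `z`.
-/

section

variable {X : Type*} [MetricSpace X]

lemma IsGeodSeg.left_mem {s : Set X} {a b : X} (hs : IsGeodSeg s a b) : a ∈ s := by
  obtain ⟨f, hf0, -, -, rfl⟩ := hs
  exact ⟨0, ⟨le_rfl, dist_nonneg⟩, hf0⟩

lemma IsGeodSeg.exists_mem_dist_eq {s : Set X} {a b : X} (hs : IsGeodSeg s a b) {r : ℝ}
    (hr₀ : 0 ≤ r) (hr : r ≤ dist a b) : ∃ w ∈ s, dist a w = r ∧ dist w b = dist a b - r := by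
  obtain ⟨f, hf0, hfd, hiso, rfl⟩ := hs
  have h0 : (0 : ℝ) ∈ Icc 0 (dist a b) := ⟨le_rfl, dist_nonneg⟩
  have hd : dist a b ∈ Icc 0 (dist a b) := ⟨dist_nonneg, le_rfl⟩
  have hr' : r ∈ Icc 0 (dist a b) := ⟨hr₀, hr⟩
  refine ⟨f r, ⟨r, hr', rfl⟩, ?_, ?_⟩
  · rw [← hf0, hiso 0 h0 r hr', zero_sub, abs_neg, abs_of_nonneg hr₀]
  · conv_lhs => rw [← hfd]
    rw [hiso r hr' _ hd, abs_sub_comm, abs_of_nonneg (sub_nonneg.2 hr)]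

lemma IsGeodesicSet.exists_isGeodSeg_subset {ℓ : Set X} (hℓ : IsGeodesicSet ℓ) {a b : X}
    (ha : a ∈ ℓ) (hb : b ∈ ℓ) : ∃ s, IsGeodSeg s a b ∧ s ⊆ ℓ := by
  obtain ⟨I, f, hI, rfl, hiso⟩ := hℓ
  obtain ⟨ta, hta, rfl⟩ := ha
  obtain ⟨tb, htb, rfl⟩ := hb
  have hdist : dist (f ta) (f tb) = |tb - ta| := by rw [hiso ta hta tb htb, abs_sub_comm]
  obtain ⟨σ, hσ_abs, hσ_end, hσ_mem⟩ : ∃ σ : ℝ, |σ| = 1 ∧ ta + σ * |tb - ta| = tb ∧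
      ∀ u ∈ Icc 0 |tb - ta|, ta + σ * u ∈ uIcc ta tb := by
    rcases le_total ta tb with h | h
    · rw [abs_of_nonneg (sub_nonneg.2 h)]
      exact ⟨1, by simp, by ring, fun u hu ↦ mem_uIcc.2 (Or.inl ⟨by linarith [hu.1],
        by linarith [hu.2]⟩)⟩
    · rw [abs_of_nonpos (sub_nonpos.2 h)]
      exact ⟨-1, by simp, by ring, fun u hu ↦ mem_uIcc.2 (Or.inr ⟨by linarith [hu.2],
        by linarith [hu.1]⟩)⟩
  have hmem : ∀ u ∈ Icc (0 : ℝ) (dist (f ta) (f tb)), ta + σ * u ∈ I := fun u hu ↦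
    hI.uIcc_subset hta htb (hσ_mem u (hdist ▸ hu))
  refine ⟨(fun u ↦ f (ta + σ * u)) '' Icc 0 (dist (f ta) (f tb)),
    ⟨fun u ↦ f (ta + σ * u), by simp, by simp only [hdist, hσ_end], fun u hu v hv ↦ ?_, rfl⟩, ?_⟩
  · rw [hiso _ (hmem u hu) _ (hmem v hv), show ta + σ * u - (ta + σ * v) = σ * (u - v) by ring,
      abs_mul, hσ_abs, one_mul]
  · rintro _ ⟨u, hu, rfl⟩
    exact ⟨_, hmem u hu, rfl⟩

lemma mem_projSet_of_dist_add_dist_eq {ℓ : Set X} {x z w : X} (hz : z ∈ projSet ℓ x)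
    (hw : dist x w + dist w z = dist x z) : z ∈ projSet ℓ w := by
  refine ⟨hz.1, le_antisymm ((le_infDist ⟨z, hz.1⟩).2 fun p hp ↦ ?_)
    (infDist_le_dist_of_mem hz.1)⟩
  have hxz : dist x z ≤ dist x p := hz.2 ▸ infDist_le_dist_of_mem hp
  linarith [dist_triangle x w p]

end

theorem stmt6_general {X : Type*} [MetricSpace X]
    (hgeo : ∀ a b : X, ∃ s : Set X, IsGeodSeg s a b)
    (ℓ : Set X) (hℓ : IsGeodesicSet ℓ) (δ : ℝ) (hδ : 0 < δ) (hslim : SlimOn δ ℓ)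
    (x y z : X) (hy : y ∈ ℓ) (hz : z ∈ projSet ℓ x)
    (s : Set X) (hs : IsGeodSeg s x y) :
    Metric.infDist z s < 4 * δ := by
  rcases le_or_gt (dist z x) (2 * δ) with hzx | hzx
  · linarith [infDist_le_dist_of_mem (x := z) hs.left_mem]
  obtain ⟨syz, hsyz, hsyzℓ⟩ := hℓ.exists_isGeodSeg_subset hy hz.1
  obtain ⟨szx, hszx⟩ := hgeo z x
  obtain ⟨w, hw, hzw, hwx⟩ := hszx.exists_mem_dist_eq (r := 2 * δ) (by positivity) hzx.le
  have hw_proj : z ∈ projSet ℓ w := mem_projSet_of_dist_add_dist_eq hz (by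
    rw [dist_comm x w, dist_comm w z, dist_comm x z]; linarith)
  obtain ⟨p, hp, hwp⟩ := mem_thickening_iff.1 ((hslim y z x syz szx s hsyz hszx hs hsyzℓ).2.1 hw)
  rcases hp with hp | hp
  · linarith [infDist_le_dist_of_mem (x := z) hp, dist_triangle z w p]
  · have hwz : dist w z ≤ dist w p := hw_proj.2 ▸ infDist_le_dist_of_mem (hsyzℓ hp)
    rw [dist_comm] at hzw
    linarith

/-- thin triangle estimate: in a proper geodesic metric space, if every geodesic
triangle with one side on the geodesic `ℓ` is `δ`-slim, then for any `x ∈ X`, `y ∈ ℓ`, and any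
nearest-point projection `z ∈ π_ℓ(x)`, every geodesic `[x,y]` passes within distance `4δ`
of `z`. -/
theorem stmt6 {X : Type*} [MetricSpace X] [ProperSpace X]
    (hgeo : ∀ a b : X, ∃ s : Set X, IsGeodSeg s a b)
    (ℓ : Set X) (hℓ : IsGeodesicSet ℓ) (δ : ℝ) (hδ : 0 < δ) (hslim : SlimOn δ ℓ)
    (x y z : X) (hy : y ∈ ℓ) (hz : z ∈ projSet ℓ x)
    (s : Set X) (hs : IsGeodSeg s x y) :
    Metric.infDist z s < 4 * δ :=
  stmt6_general hgeo ℓ hℓ δ hδ hslim x y z hy hz s hs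
end

section
/- Let Ω be a properly convex domain in real projective space with Hilbert metric d_Ω, let ℓ be a projective line segment that is a geodesic in Ω, and let π_ℓ : Ω → 2^ℓ be the set-valued nearest-point projection. Then for any convex subset A ⊆ Ω, the union π_ℓ(A) is a connected subset of ℓ. -/
open Classical in
/-- The Hilbert (cross-ratio) distance of a convex domain `Ω`, in an affine-chart model:
`d_Ω(x,y) = ½ log [a,b;x,y]` computed along the chord of `Ω` through `x` and `y`
(parametrized by `t ↦ x + t(y−x)`, with chord parameters `sInf S < 0 < 1 < sSup S`). -/
noncomputable def hilbertDist {E : Type*} [NormedAddCommGroup E] [NormedSpace ℝ E]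
    (Ω : Set E) (x y : E) : ℝ :=
  if x = y then 0
  else
    (1 / 2) * Real.log
      (((1 - sInf {t : ℝ | x + t • (y - x) ∈ Ω}) * sSup {t : ℝ | x + t • (y - x) ∈ Ω}) /
        ((-sInf {t : ℝ | x + t • (y - x) ∈ Ω}) * (sSup {t : ℝ | x + t • (y - x) ∈ Ω} - 1)))

/-- A properly convex domain, in an affine-chart model: a nonempty bounded open convex set. -/
def IsProperlyConvex {E : Type*} [NormedAddCommGroup E] [NormedSpace ℝ E] (Ω : Set E) : Prop :=
  IsOpen Ω ∧ Convex ℝ Ω ∧ Bornology.IsBounded Ω ∧ Ω.Nonempty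

/-- The set-valued nearest-point projection (for the Hilbert metric) onto `ℓ ⊆ Ω`. -/
noncomputable def hProjSet {E : Type*} [NormedAddCommGroup E] [NormedSpace ℝ E]
    (Ω ℓ : Set E) (x : E) : Set E :=
  {z ∈ ℓ | hilbertDist Ω x z = sInf {r : ℝ | ∃ w ∈ ℓ, r = hilbertDist Ω x w}}

/-!
Based at `x ∈ Ω`, write `g_x = gauge (-x +ᵥ Ω)`. Then
`hilbertDist Ω x y = ½ log ((1 + g_x (x - y)) / (1 - g_x (y - x)))`, so Hilbert balls are convex
(gauges are convex), and since `(x, v) ↦ g_x v` is jointly continuous they vary upper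
semicontinuously with the centre. Suppose `u₀ ≤ u ≤ u₁` along `ℓ` with `u₀ ∈ π_ℓ(x)`,
`u₁ ∈ π_ℓ(y)`, `x, y ∈ A`. Every `z ∈ [x, y]` has a nearest point in `[p, q] ∩ Ω`, since its
Hilbert balls meet the compact segment `[p, q]` in compact sets; the `z` having one before `u` and
those having one after `u` form two closed sets covering `[x, y]`. By connectedness some `z` has
nearest points on both sides of `u`, and by convexity of its Hilbert balls `u ∈ π_ℓ(z)`.
-/

open Set Filter Topology Pointwise AffineMap

theorem convexOn_gauge {E : Type*} [AddCommGroup E] [Module ℝ E] {s : Set E} (hs : Convex ℝ s)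
    (ha : Absorbent ℝ s) : ConvexOn ℝ univ (gauge s) := by
  refine ⟨convex_univ, fun v _ w _ a b ha0 hb0 _ => ?_⟩
  calc gauge s (a • v + b • w) ≤ gauge s (a • v) + gauge s (b • w) := gauge_add_le hs ha _ _
    _ = a • gauge s v + b • gauge s w := by
      rw [gauge_smul_of_nonneg ha0, gauge_smul_of_nonneg hb0]

theorem neg_vadd_mem_nhds_zero {G : Type*} [AddGroup G] [TopologicalSpace G]
    [IsTopologicalAddGroup G] {U : Set G} {x : G} (hU : IsOpen U) (hx : x ∈ U) :
    -x +ᵥ U ∈ 𝓝 (0 : G) :=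
  (hU.vadd (-x)).mem_nhds (by simpa [mem_vadd_set_iff_neg_vadd_mem] using hx)

variable {E : Type*} [NormedAddCommGroup E] [NormedSpace ℝ E] {Ω : Set E} {x y v : E}

theorem gauge_neg_vadd_lt_iff (hΩo : IsOpen Ω) (hΩc : Convex ℝ Ω) (hx : x ∈ Ω) {r : ℝ}
    (hr : 0 < r) :
    gauge (-x +ᵥ Ω) v < r ↔ x + r⁻¹ • v ∈ Ω := by
  rw [← inv_mul_lt_one₀ hr, ← smul_eq_mul, ← gauge_smul_of_nonneg (inv_nonneg.2 hr.le),
    gauge_lt_one_iff_mem_interior (hΩc.vadd _) (neg_vadd_mem_nhds_zero hΩo hx),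
    (hΩo.vadd _).interior_eq]
  simp [mem_vadd_set_iff_neg_vadd_mem]

theorem gauge_neg_vadd_le_iff (hΩo : IsOpen Ω) (hΩc : Convex ℝ Ω) (hx : x ∈ Ω) {r : ℝ}
    (hr : 0 < r) :
    gauge (-x +ᵥ Ω) v ≤ r ↔ x + r⁻¹ • v ∈ closure Ω := by
  rw [← inv_mul_le_one₀ hr, ← smul_eq_mul, ← gauge_smul_of_nonneg (inv_nonneg.2 hr.le),
    gauge_le_one_iff_mem_closure (hΩc.vadd _) (neg_vadd_mem_nhds_zero hΩo hx), closure_vadd]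
  simp [mem_vadd_set_iff_neg_vadd_mem]

theorem continuousAt_gauge_neg_vadd (hΩo : IsOpen Ω) (hΩc : Convex ℝ Ω) (hx : x ∈ Ω) (v : E) :
    ContinuousAt (fun p : E × E => gauge (-p.1 +ᵥ Ω) p.2) (x, v) := by
  have hbase : ∀ᶠ p : E × E in 𝓝 (x, v), p.1 ∈ Ω :=
    continuousAt_fst.eventually_mem (hΩo.mem_nhds hx)
  have hmove (r : ℝ) : Tendsto (fun p : E × E => p.1 + r⁻¹ • p.2) (𝓝 (x, v))
      (𝓝 (x + r⁻¹ • v)) :=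
    (continuous_fst.add (continuous_snd.const_smul _)).tendsto _
  -- `g_x v < r` and `r < g_x v` are the open conditions `x + r⁻¹ • v ∈ Ω`, `∉ closure Ω`
  refine tendsto_order.2 ⟨fun a ha => ?_, fun b hb => ?_⟩
  · rcases lt_or_ge a 0 with ha0 | ha0
    · exact Eventually.of_forall fun p => ha0.trans_le (gauge_nonneg _)
    obtain ⟨r, har, hr⟩ := exists_between ha
    have hr0 : 0 < r := ha0.trans_lt har
    have hout : x + r⁻¹ • v ∉ closure Ω := by
      rw [← gauge_neg_vadd_le_iff hΩo hΩc hx hr0]; exact hr.not_ge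
    filter_upwards [hbase, hmove r (isClosed_closure.isOpen_compl.mem_nhds hout)] with p hp hpr
    exact har.trans (not_le.1 fun h => hpr ((gauge_neg_vadd_le_iff hΩo hΩc hp hr0).1 h))
  · obtain ⟨r, hr, hrb⟩ := exists_between hb
    have hr0 : 0 < r := (gauge_nonneg _).trans_lt hr
    have hin := (gauge_neg_vadd_lt_iff hΩo hΩc hx hr0).1 hr
    filter_upwards [hbase, hmove r (hΩo.mem_nhds hin)] with p hp hpr
    exact ((gauge_neg_vadd_lt_iff hΩo hΩc hp hr0).2 hpr).trans hrb

theorem ContinuousOn.gauge_neg_vadd (hΩo : IsOpen Ω) (hΩc : Convex ℝ Ω) {X : Type*}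
    [TopologicalSpace X] {f g : X → E} {S : Set X}
    (hf : ContinuousOn f S) (hg : ContinuousOn g S) (hfS : MapsTo f S Ω) :
    ContinuousOn (fun b => gauge (-f b +ᵥ Ω) (g b)) S := fun b hb =>
  (continuousAt_gauge_neg_vadd hΩo hΩc (hfS hb) (g b)).comp_continuousWithinAt
    (f := fun b => (f b, g b)) ((hf b hb).prodMk (hg b hb))

theorem gauge_neg_vadd_pos (hΩo : IsOpen Ω) (hΩb : Bornology.IsBounded Ω) (hx : x ∈ Ω)
    (hv : v ≠ 0) : 0 < gauge (-x +ᵥ Ω) v :=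
  (gauge_pos (absorbent_nhds_zero (neg_vadd_mem_nhds_zero hΩo hx))
    ((NormedSpace.isVonNBounded_iff ℝ).2 (hΩb.vadd _))).2 hv

theorem gauge_neg_vadd_sub_lt_one_iff (hΩo : IsOpen Ω) (hΩc : Convex ℝ Ω) (hx : x ∈ Ω) :
    gauge (-x +ᵥ Ω) (y - x) < 1 ↔ y ∈ Ω := by
  simpa using gauge_neg_vadd_lt_iff hΩo hΩc hx one_pos (v := y - x)

theorem add_smul_mem_iff_lt_inv_gauge (hΩo : IsOpen Ω) (hΩc : Convex ℝ Ω)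
    (hΩb : Bornology.IsBounded Ω) (hx : x ∈ Ω) (hv : v ≠ 0) {t : ℝ} (ht : 0 < t) :
    x + t • v ∈ Ω ↔ t < (gauge (-x +ᵥ Ω) v)⁻¹ := by
  rw [← lt_inv_comm₀ (gauge_neg_vadd_pos hΩo hΩb hx hv) ht,
    gauge_neg_vadd_lt_iff hΩo hΩc hx (inv_pos.2 ht), inv_inv]

theorem setOf_add_smul_sub_mem_eq_Ioo (hΩo : IsOpen Ω) (hΩc : Convex ℝ Ω)
    (hΩb : Bornology.IsBounded Ω) (hx : x ∈ Ω) (hxy : x ≠ y) :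
    {t : ℝ | x + t • (y - x) ∈ Ω} =
      Ioo (-(gauge (-x +ᵥ Ω) (x - y))⁻¹) (gauge (-x +ᵥ Ω) (y - x))⁻¹ := by
  have hg := inv_pos.2 (gauge_neg_vadd_pos hΩo hΩb hx (sub_ne_zero.2 hxy.symm))
  have hh := inv_pos.2 (gauge_neg_vadd_pos hΩo hΩb hx (sub_ne_zero.2 hxy))
  ext t
  simp only [mem_ofPred_eq, mem_Ioo]
  rcases lt_trichotomy 0 t with ht | rfl | ht
  · rw [add_smul_mem_iff_lt_inv_gauge hΩo hΩc hΩb hx (sub_ne_zero.2 hxy.symm) ht]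
    exact ⟨fun h => ⟨by linarith, h⟩, And.right⟩
  · exact iff_of_true (by simpa using hx) ⟨by linarith, hg⟩
  · rw [show t • (y - x) = (-t) • (x - y) by rw [neg_smul, ← smul_neg, neg_sub],
      add_smul_mem_iff_lt_inv_gauge hΩo hΩc hΩb hx (sub_ne_zero.2 hxy) (neg_pos.2 ht)]
    exact ⟨fun h => ⟨by linarith, by linarith⟩, fun h => by linarith [h.1]⟩

theorem hilbertDist_eq_log (hΩo : IsOpen Ω) (hΩc : Convex ℝ Ω) (hΩb : Bornology.IsBounded Ω)
    (hx : x ∈ Ω) (hy : y ∈ Ω) :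
    hilbertDist Ω x y =
      1 / 2 * Real.log ((1 + gauge (-x +ᵥ Ω) (x - y)) / (1 - gauge (-x +ᵥ Ω) (y - x))) := by
  rcases eq_or_ne x y with rfl | hxy
  · simp [hilbertDist]
  have hg := gauge_neg_vadd_pos hΩo hΩb hx (sub_ne_zero.2 hxy.symm)
  have hh := gauge_neg_vadd_pos hΩo hΩb hx (sub_ne_zero.2 hxy)
  have hg1 := (gauge_neg_vadd_sub_lt_one_iff hΩo hΩc hx).2 hy
  rw [hilbertDist, if_neg hxy, setOf_add_smul_sub_mem_eq_Ioo hΩo hΩc hΩb hx hxy,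
    csSup_Ioo (by linarith [inv_pos.2 hg, inv_pos.2 hh]),
    csInf_Ioo (by linarith [inv_pos.2 hg, inv_pos.2 hh])]
  congr 2
  field_simp [(sub_pos.2 hg1).ne']
  ring

theorem continuousOn_hilbertDist (hΩo : IsOpen Ω) (hΩc : Convex ℝ Ω)
    (hΩb : Bornology.IsBounded Ω) :
    ContinuousOn (fun p : E × E => hilbertDist Ω p.1 p.2) (Ω ×ˢ Ω) := by
  have hfst : MapsTo Prod.fst (Ω ×ˢ Ω) Ω := fun p hp => hp.1
  have hg := ContinuousOn.gauge_neg_vadd hΩo hΩc continuousOn_fst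
    (continuousOn_snd.sub continuousOn_fst) hfst
  have hh := ContinuousOn.gauge_neg_vadd hΩo hΩc continuousOn_fst
    (continuousOn_fst.sub continuousOn_snd) hfst
  have hden : ∀ p ∈ Ω ×ˢ Ω, 0 < 1 - gauge (-p.1 +ᵥ Ω) (p.2 - p.1) := fun p hp =>
    sub_pos.2 ((gauge_neg_vadd_sub_lt_one_iff hΩo hΩc hp.1).2 hp.2)
  refine ContinuousOn.congr ?_ fun p hp => hilbertDist_eq_log hΩo hΩc hΩb hp.1 hp.2
  refine continuousOn_const.mul (ContinuousOn.log
    (f := fun p : E × E =>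
      (1 + gauge (-p.1 +ᵥ Ω) (p.1 - p.2)) / (1 - gauge (-p.1 +ᵥ Ω) (p.2 - p.1)))
    ((continuousOn_const.add hh).div (continuousOn_const.sub hg) fun p hp => (hden p hp).ne')
    fun p hp => ?_)
  exact (div_pos (by linarith [gauge_nonneg (s := -p.1 +ᵥ Ω) (p.1 - p.2)]) (hden p hp)).ne'

theorem hilbertDist_nonneg (hΩo : IsOpen Ω) (hΩc : Convex ℝ Ω) (hΩb : Bornology.IsBounded Ω)
    (hx : x ∈ Ω) (hy : y ∈ Ω) : 0 ≤ hilbertDist Ω x y := by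
  have hden := sub_pos.2 ((gauge_neg_vadd_sub_lt_one_iff hΩo hΩc hx).2 hy)
  rw [hilbertDist_eq_log hΩo hΩc hΩb hx hy]
  refine mul_nonneg (by norm_num) (Real.log_nonneg ((le_div_iff₀ hden).2 ?_))
  linarith [gauge_nonneg (s := -x +ᵥ Ω) (x - y), gauge_nonneg (s := -x +ᵥ Ω) (y - x)]

/-- The Hilbert closed ball `{y ∈ Ω | hilbertDist Ω x y ≤ c}` (`hilbertClosedBall_eq`), written
through gauges so that it is visibly closed and convex. -/
def hilbertClosedBall (Ω : Set E) (x : E) (c : ℝ) : Set E :=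
  {y | 1 + gauge (-x +ᵥ Ω) (x - y) ≤ Real.exp (2 * c) * (1 - gauge (-x +ᵥ Ω) (y - x))}

theorem hilbertClosedBall_eq (hΩo : IsOpen Ω) (hΩc : Convex ℝ Ω) (hΩb : Bornology.IsBounded Ω)
    (hx : x ∈ Ω) (c : ℝ) : hilbertClosedBall Ω x c = {y ∈ Ω | hilbertDist Ω x y ≤ c} := by
  ext y
  simp only [hilbertClosedBall, mem_ofPred_eq]
  have hh := gauge_nonneg (s := -x +ᵥ Ω) (x - y)
  have hexp := Real.exp_pos (2 * c)
  by_cases hy : y ∈ Ω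
  · have hden := sub_pos.2 ((gauge_neg_vadd_sub_lt_one_iff hΩo hΩc hx).2 hy)
    rw [hilbertDist_eq_log hΩo hΩc hΩb hx hy, ← div_le_iff₀ hden,
      ← Real.log_le_iff_le_exp (div_pos (by linarith) hden)]
    exact ⟨fun h => ⟨hy, by linarith⟩, fun h => by linarith [h.2]⟩
  · have hden : 1 - gauge (-x +ᵥ Ω) (y - x) ≤ 0 :=
      sub_nonpos.2 (not_lt.1 (mt (gauge_neg_vadd_sub_lt_one_iff hΩo hΩc hx).1 hy))
    exact iff_of_false (fun h => by nlinarith) fun h => hy h.1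

theorem IsClosed.sep_mem_hilbertClosedBall (hΩo : IsOpen Ω) (hΩc : Convex ℝ Ω) {X : Type*}
    [TopologicalSpace X] {K : Set X} (hK : IsClosed K) {f g : X → E} {r : X → ℝ}
    (hf : ContinuousOn f K) (hg : ContinuousOn g K) (hr : ContinuousOn r K) (hfK : MapsTo f K Ω) :
    IsClosed {b ∈ K | g b ∈ hilbertClosedBall Ω (f b) (r b)} :=
  hK.isClosed_le (continuousOn_const.add (ContinuousOn.gauge_neg_vadd hΩo hΩc hf (hf.sub hg) hfK))
    ((Real.continuous_exp.comp_continuousOn (continuousOn_const.mul hr)).mul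
      (continuousOn_const.sub (ContinuousOn.gauge_neg_vadd hΩo hΩc hf (hg.sub hf) hfK)))

theorem convex_hilbertClosedBall (hΩo : IsOpen Ω) (hΩc : Convex ℝ Ω) (hx : x ∈ Ω) (c : ℝ) :
    Convex ℝ (hilbertClosedBall Ω x c) := by
  intro y₀ h₀ y₁ h₁ a b ha hb hab
  obtain rfl : b = 1 - a := eq_sub_of_add_eq' hab
  have hconv :=
    convexOn_gauge (hΩc.vadd (-x)) (absorbent_nhds_zero (neg_vadd_mem_nhds_zero hΩo hx))
  have hG := hconv.2 (mem_univ (y₀ - x)) (mem_univ (y₁ - x)) ha hb hab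
  have hH := hconv.2 (mem_univ (x - y₀)) (mem_univ (x - y₁)) ha hb hab
  rw [show a • (y₀ - x) + (1 - a) • (y₁ - x) = a • y₀ + (1 - a) • y₁ - x by module] at hG
  rw [show a • (x - y₀) + (1 - a) • (x - y₁) = x - (a • y₀ + (1 - a) • y₁) by module] at hH
  simp only [hilbertClosedBall, mem_ofPred_eq, smul_eq_mul] at h₀ h₁ hG hH ⊢
  nlinarith [mul_le_mul_of_nonneg_left hG (Real.exp_pos (2 * c)).le]

theorem mem_hProjSet_iff {ℓ : Set E} (hΩo : IsOpen Ω) (hΩc : Convex ℝ Ω)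
    (hΩb : Bornology.IsBounded Ω) (hℓ : ℓ ⊆ Ω) (hx : x ∈ Ω) {w : E} :
    w ∈ hProjSet Ω ℓ x ↔ w ∈ ℓ ∧ IsMinOn (hilbertDist Ω x) ℓ w := by
  refine and_congr_right fun hw => ⟨fun h => isMinOn_iff.2 fun u hu => ?_, fun h => ?_⟩
  · rw [h]
    refine csInf_le ⟨0, ?_⟩ ⟨u, hu, rfl⟩
    rintro _ ⟨u', hu', rfl⟩
    exact hilbertDist_nonneg hΩo hΩc hΩb hx (hℓ hu')
  · refine Eq.symm (IsLeast.csInf_eq ⟨⟨w, hw, rfl⟩, ?_⟩)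
    rintro _ ⟨u, hu, rfl⟩
    exact isMinOn_iff.1 h u hu

theorem mem_hProjSet_of_mem_segment (hΩo : IsOpen Ω) (hΩc : Convex ℝ Ω)
    (hΩb : Bornology.IsBounded Ω) {ℓ : Set E} (hℓ : ℓ ⊆ Ω) (hx : x ∈ Ω) {w₀ w₁ w : E}
    (h₀ : ∀ u ∈ ℓ, w₀ ∈ hilbertClosedBall Ω x (hilbertDist Ω x u))
    (h₁ : ∀ u ∈ ℓ, w₁ ∈ hilbertClosedBall Ω x (hilbertDist Ω x u))
    (hw : w ∈ segment ℝ w₀ w₁) (hwℓ : w ∈ ℓ) : w ∈ hProjSet Ω ℓ x :=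
  (mem_hProjSet_iff hΩo hΩc hΩb hℓ hx).2 ⟨hwℓ, isMinOn_iff.2 fun u hu =>
    (hilbertClosedBall_eq hΩo hΩc hΩb hx _ ▸
      (convex_hilbertClosedBall hΩo hΩc hx _).segment_subset (h₀ u hu) (h₁ u hu) hw).2⟩

theorem exists_isMinOn_hilbertDist (hΩo : IsOpen Ω) (hΩc : Convex ℝ Ω)
    (hΩb : Bornology.IsBounded Ω) (hx : x ∈ Ω) {S : Set E} (hS : IsCompact S) {y₀ : E}
    (hy₀ : y₀ ∈ S ∩ Ω) : ∃ y ∈ S ∩ Ω, IsMinOn (hilbertDist Ω x) (S ∩ Ω) y := by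
  have hball := hilbertClosedBall_eq hΩo hΩc hΩb hx (hilbertDist Ω x y₀)
  set K := S ∩ hilbertClosedBall Ω x (hilbertDist Ω x y₀)
  have hKΩ : K ⊆ S ∩ Ω := fun y hy => ⟨hy.1, (hball ▸ hy.2).1⟩
  have hy₀K : y₀ ∈ K := ⟨hy₀.1, hball ▸ ⟨hy₀.2, le_rfl⟩⟩
  have hdist : ContinuousOn (hilbertDist Ω x) K :=
    (continuousOn_hilbertDist hΩo hΩc hΩb).comp (continuousOn_const.prodMk continuousOn_id)
      fun y hy => ⟨hx, (hKΩ hy).2⟩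
  have hK : IsCompact K := hS.of_isClosed_subset (hS.isClosed.sep_mem_hilbertClosedBall hΩo hΩc
    continuousOn_const continuousOn_id continuousOn_const fun _ _ => hx) inter_subset_left
  obtain ⟨y, hyK, hmin⟩ := hK.exists_isMinOn ⟨y₀, hy₀K⟩ hdist
  refine ⟨y, hKΩ hyK, isMinOn_iff.2 fun z hz => ?_⟩
  by_cases hz₀ : hilbertDist Ω x z ≤ hilbertDist Ω x y₀
  · exact isMinOn_iff.1 hmin z ⟨hz.1, hball ▸ ⟨hz.2, hz₀⟩⟩
  · exact (isMinOn_iff.1 hmin y₀ hy₀K).trans (not_le.1 hz₀).le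

theorem exists_mem_Icc_lineMap_nearest (hΩo : IsOpen Ω) (hΩc : Convex ℝ Ω)
    (hΩb : Bornology.IsBounded Ω) {p q : E} (hℓ : openSegment ℝ p q ⊆ Ω) (hx : x ∈ Ω) :
    ∃ σ ∈ Icc (0 : ℝ) 1, lineMap p q σ ∈ Ω ∧
      ∀ u ∈ openSegment ℝ p q, hilbertDist Ω x (lineMap p q σ) ≤ hilbertDist Ω x u := by
  have hmid : lineMap p q (1 / 2 : ℝ) ∈ openSegment ℝ p q := by
    rw [openSegment_eq_image_lineMap]; exact mem_image_of_mem _ ⟨by norm_num, by norm_num⟩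
  obtain ⟨_, ⟨hseg, hyΩ⟩, hmin⟩ := exists_isMinOn_hilbertDist hΩo hΩc hΩb hx
    (segment_eq_image_lineMap ℝ p q ▸ isCompact_Icc.image lineMap_continuous)
    ⟨openSegment_subset_segment _ _ _ hmid, hℓ hmid⟩
  rw [segment_eq_image_lineMap] at hseg
  obtain ⟨σ, hσ, rfl⟩ := hseg
  exact ⟨σ, hσ, hyΩ, fun u hu => isMinOn_iff.1 hmin u ⟨openSegment_subset_segment _ _ _ hu, hℓ hu⟩⟩

theorem IsPreconnected.exists_le_and_ge_of_isCompact {X : Type*} [TopologicalSpace X]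
    [T2Space X] {T : Set X} (hT : IsPreconnected T) {G : Set (X × ℝ)} (hG : IsCompact G)
    (hfib : ∀ t ∈ T, ∃ σ, (t, σ) ∈ G) {t₀ t₁ : X} (ht₀ : t₀ ∈ T) (ht₁ : t₁ ∈ T)
    {σ₀ σ₁ s : ℝ} (h₀ : (t₀, σ₀) ∈ G) (h₁ : (t₁, σ₁) ∈ G) (hs₀ : σ₀ ≤ s) (hs₁ : s ≤ σ₁) :
    ∃ t ∈ T, ∃ σ ≤ s, ∃ σ' ≥ s, (t, σ) ∈ G ∧ (t, σ') ∈ G := by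
  have hproj (c : Set ℝ) (hc : IsClosed c) : IsClosed (Prod.fst '' (G ∩ Prod.snd ⁻¹' c)) :=
    ((hG.inter_right (hc.preimage continuous_snd)).image continuous_fst).isClosed
  have hcover :
      T ⊆ Prod.fst '' (G ∩ Prod.snd ⁻¹' Iic s) ∪ Prod.fst '' (G ∩ Prod.snd ⁻¹' Ici s) := by
    intro t ht
    obtain ⟨σ, hσ⟩ := hfib t ht
    rcases le_total σ s with h | h
    exacts [Or.inl ⟨(t, σ), ⟨hσ, h⟩, rfl⟩, Or.inr ⟨(t, σ), ⟨hσ, h⟩, rfl⟩]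
  obtain ⟨t, ht, ⟨⟨_, σ⟩, ⟨hσ, hσs⟩, rfl⟩, ⟨⟨t', σ'⟩, ⟨hσ', hσ's⟩, rfl⟩⟩ :=
    isPreconnected_closed_iff.1 hT _ _ (hproj _ isClosed_Iic) (hproj _ isClosed_Ici) hcover
      ⟨t₀, ht₀, (t₀, σ₀), ⟨h₀, hs₀⟩, rfl⟩ ⟨t₁, ht₁, (t₁, σ₁), ⟨h₁, hs₁⟩, rfl⟩
  exact ⟨t', ht, σ, hσs, σ', hσ's, hσ, hσ'⟩

theorem exists_mem_segment_lineMap_mem_hProjSet (hΩo : IsOpen Ω) (hΩc : Convex ℝ Ω)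
    (hΩb : Bornology.IsBounded Ω) {p q : E} (hℓ : openSegment ℝ p q ⊆ Ω) (hx : x ∈ Ω)
    (hy : y ∈ Ω) {σ₀ σ₁ s : ℝ} (hσ₀ : σ₀ ∈ Ioo 0 1) (hσ₁ : σ₁ ∈ Ioo 0 1) (hs₀ : σ₀ ≤ s)
    (hs₁ : s ≤ σ₁) (h₀ : lineMap p q σ₀ ∈ hProjSet Ω (openSegment ℝ p q) x)
    (h₁ : lineMap p q σ₁ ∈ hProjSet Ω (openSegment ℝ p q) y) :
    ∃ z ∈ segment ℝ x y, lineMap p q s ∈ hProjSet Ω (openSegment ℝ p q) z := by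
  set ℓ := openSegment ℝ p q
  have hℓ_eq : ℓ = lineMap p q '' Ioo (0 : ℝ) 1 := openSegment_eq_image_lineMap ℝ p q
  have hTΩ : segment ℝ x y ⊆ Ω := hΩc.segment_subset hx hy
  have hball (z : E) (hz : z ∈ segment ℝ x y) := hilbertClosedBall_eq hΩo hΩc hΩb (hTΩ hz)
  set K := segment ℝ x y ×ˢ Icc (0 : ℝ) 1
  have hK : IsCompact K :=
    (segment_eq_image_lineMap ℝ x y ▸ isCompact_Icc.image lineMap_continuous).prod isCompact_Icc
  have hKΩ : MapsTo Prod.fst K Ω := fun w hw => hTΩ hw.1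
  -- `(z, σ) ∈ G` iff `lineMap p q σ` is a point of `[p, q] ∩ Ω` at least as close to `z` as `ℓ`
  set G := ⋂ u ∈ ℓ,
    {w ∈ K | lineMap p q w.2 ∈ hilbertClosedBall Ω w.1 (hilbertDist Ω w.1 u)}
  have mem_G (z : E) (hz : z ∈ segment ℝ x y) (σ : ℝ) (hσ : σ ∈ Icc (0 : ℝ) 1)
      (hmin : lineMap p q σ ∈ Ω ∧ ∀ u ∈ ℓ, hilbertDist Ω z (lineMap p q σ) ≤ hilbertDist Ω z u) :
      (z, σ) ∈ G :=
    mem_iInter₂.2 fun u hu => ⟨⟨hz, hσ⟩, hball z hz _ ▸ ⟨hmin.1, hmin.2 u hu⟩⟩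
  have hGclosed : IsClosed G := isClosed_biInter fun u hu =>
    hK.isClosed.sep_mem_hilbertClosedBall hΩo hΩc continuousOn_fst
      (lineMap_continuous.comp continuous_snd).continuousOn
      ((continuousOn_hilbertDist hΩo hΩc hΩb).comp (continuousOn_fst.prodMk continuousOn_const)
        fun w hw => ⟨hKΩ hw, hℓ hu⟩) hKΩ
  have hσ₀ℓ : lineMap p q σ₀ ∈ ℓ := hℓ_eq ▸ mem_image_of_mem _ hσ₀
  have hG : IsCompact G :=
    hK.of_isClosed_subset hGclosed ((biInter_subset_of_mem hσ₀ℓ).trans (sep_subset _ _))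
  have hfib (z : E) (hz : z ∈ segment ℝ x y) : ∃ σ, (z, σ) ∈ G :=
    let ⟨σ, hσ, hmin⟩ := exists_mem_Icc_lineMap_nearest hΩo hΩc hΩb hℓ (hTΩ hz)
    ⟨σ, mem_G z hz σ hσ hmin⟩
  have hend {a : E} (ha : a ∈ segment ℝ x y) {σ : ℝ} (hσ : σ ∈ Ioo (0 : ℝ) 1)
      (hproj : lineMap p q σ ∈ hProjSet Ω ℓ a) : (a, σ) ∈ G := by
    obtain ⟨hσℓ, hmin⟩ := (mem_hProjSet_iff hΩo hΩc hΩb hℓ (hTΩ ha)).1 hproj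
    exact mem_G a ha σ (Ioo_subset_Icc_self hσ) ⟨hℓ hσℓ, isMinOn_iff.1 hmin⟩
  obtain ⟨z, hz, σ, hσs, σ', hσ's, hσ, hσ'⟩ :=
    (convex_segment x y).isPreconnected.exists_le_and_ge_of_isCompact hG hfib
      (left_mem_segment ℝ x y) (right_mem_segment ℝ x y)
      (hend (left_mem_segment ℝ x y) hσ₀ h₀) (hend (right_mem_segment ℝ x y) hσ₁ h₁) hs₀ hs₁
  have hsℓ : lineMap p q s ∈ ℓ :=
    hℓ_eq ▸ mem_image_of_mem _ ⟨hσ₀.1.trans_le hs₀, hs₁.trans_lt hσ₁.2⟩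
  have hseg : lineMap p q s ∈ segment ℝ (lineMap p q σ) (lineMap p q σ') := by
    rw [← image_segment, segment_eq_Icc (hσs.trans hσ's)]
    exact mem_image_of_mem _ ⟨hσs, hσ's⟩
  exact ⟨z, hz, mem_hProjSet_of_mem_segment hΩo hΩc hΩb hℓ (hTΩ hz)
    (fun u hu => (mem_iInter₂.1 hσ u hu).2) (fun u hu => (mem_iInter₂.1 hσ' u hu).2) hseg hsℓ⟩

theorem stmt8_general {n : ℕ} (Ω : Set (EuclideanSpace ℝ (Fin n))) (hΩ : IsProperlyConvex Ω)
    (p q : EuclideanSpace ℝ (Fin n))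
    (hℓ : openSegment ℝ p q ⊆ Ω)
    (A : Set (EuclideanSpace ℝ (Fin n))) (hA : A ⊆ Ω) (hAc : Convex ℝ A) :
    IsPreconnected (⋃ a ∈ A, hProjSet Ω (openSegment ℝ p q) a) ∧
      (⋃ a ∈ A, hProjSet Ω (openSegment ℝ p q) a) ⊆ openSegment ℝ p q := by
  obtain ⟨hΩo, hΩc, hΩb, -⟩ := hΩ
  set U := ⋃ a ∈ A, hProjSet Ω (openSegment ℝ p q) a
  have hUℓ : U ⊆ openSegment ℝ p q := iUnion₂_subset fun a _ => sep_subset _ _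
  refine ⟨?_, hUℓ⟩
  have hU : U = lineMap p q '' (Ioo (0 : ℝ) 1 ∩ lineMap p q ⁻¹' U) := by
    rw [image_inter_preimage, ← openSegment_eq_image_lineMap, inter_eq_right.2 hUℓ]
  rw [hU]
  refine (OrdConnected.isPreconnected ⟨?_⟩).image _ lineMap_continuous.continuousOn
  rintro σ₀ ⟨hσ₀, hu₀⟩ σ₁ ⟨hσ₁, hu₁⟩ s ⟨hs₀, hs₁⟩
  obtain ⟨x, hx, hx₀⟩ := mem_iUnion₂.1 hu₀
  obtain ⟨y, hy, hy₁⟩ := mem_iUnion₂.1 hu₁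
  obtain ⟨z, hz, hzs⟩ := exists_mem_segment_lineMap_mem_hProjSet hΩo hΩc hΩb hℓ (hA hx) (hA hy)
    hσ₀ hσ₁ hs₀ hs₁ hx₀ hy₁
  exact ⟨⟨hσ₀.1.trans_le hs₀, hs₁.trans_lt hσ₁.2⟩,
    mem_iUnion₂.2 ⟨z, hAc.segment_subset hx hy hz, hzs⟩⟩

/-- let `Ω` be a properly convex domain with Hilbert metric, and `ℓ` a projective
line segment that is a geodesic in `Ω` (an open segment with endpoints in the closure of `Ω`,
contained in `Ω`). Then for any convex `A ⊆ Ω`, the nearest-point projection `π_ℓ(A)` is a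
connected subset of `ℓ`. -/
theorem stmt8 {n : ℕ} (Ω : Set (EuclideanSpace ℝ (Fin n))) (hΩ : IsProperlyConvex Ω)
    (p q : EuclideanSpace ℝ (Fin n)) (hp : p ∈ closure Ω) (hq : q ∈ closure Ω) (hpq : p ≠ q)
    (hℓ : openSegment ℝ p q ⊆ Ω)
    (A : Set (EuclideanSpace ℝ (Fin n))) (hA : A ⊆ Ω) (hAc : Convex ℝ A) :
    IsPreconnected (⋃ a ∈ A, hProjSet Ω (openSegment ℝ p q) a) ∧
      (⋃ a ∈ A, hProjSet Ω (openSegment ℝ p q) a) ⊆ openSegment ℝ p q :=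
  stmt8_general Ω hΩ p q hℓ A hA hAc
end

section
/- Let (X,d) be a proper geodesic metric space, M a Morse gauge, α : [0,∞) → X an M-Morse geodesic ray, and β : [0,∞) → X a geodesic ray with β(0) = α(0) whose image has finite Hausdorff distance from the image of α. Then there exists δ_M depending only on M (and X) such that d(α(t), β(t)) ≤ δ_M for all t ≥ 0. -/
open Set Metric

/-- A unit-speed geodesic ray `α : [0,∞) → X`. -/
def IsGeodRay {X : Type*} [MetricSpace X] (α : ℝ → X) : Prop :=
  ∀ s ∈ Set.Ici (0 : ℝ), ∀ t ∈ Set.Ici (0 : ℝ), dist (α s) (α t) = |s - t|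

/-- `α` is `M`-Morse: every `(λ,a)`-quasi-geodesic with endpoints on `α` stays within
`M λ a` of (the image of) `α`. -/
def IsMorseRay {X : Type*} [MetricSpace X] (M : ℝ → ℝ → ℝ) (α : ℝ → X) : Prop :=
  ∀ lam a : ℝ, 1 ≤ lam → 0 ≤ a → ∀ (q : ℝ → X) (s t : ℝ), s ≤ t →
    (∀ u ∈ Set.Icc s t, ∀ v ∈ Set.Icc s t,
      (1 / lam) * |u - v| - a ≤ dist (q u) (q v) ∧ dist (q u) (q v) ≤ lam * |u - v| + a) →
    q s ∈ α '' Set.Ici 0 → q t ∈ α '' Set.Ici 0 →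
    ∀ u ∈ Set.Icc s t, ∃ p ∈ α '' Set.Ici 0, dist (q u) p ≤ M lam a

/-!
Let `f(s)` be the distance from `β s` to the image `A` of `α`, and `L` its lower limit. If
`β t₁` and `β t₂` (with `t₁ < t₂` far apart, beyond the point where `f > L - 1`) are within
`L + 1` of points `p₁, p₂ ∈ A`, then the path `p₁ → β t₁ → β t₂ → p₂` made of two geodesic
segments and a piece of `β` is a `(3, 2)`-quasi-geodesic, since `β` never comes much closer to
`pᵢ` than `β tᵢ` does. The Morse property puts `β t₁` within `M 3 2` of `A`, so `L < M 3 2 + 1`.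
Next, jumping from a late point `β s` with `f(s) < L + 1` to `A` turns `β|[0, s]` into a
`(1, M 3 2 + 2)`-quasi-geodesic with endpoints on `A`, so all of `β` lies within
`K = M 1 (M 3 2 + 2)` of `A`. Finally, since `α` and `β` start at the same point,
`dist (β t) (α r) ≤ K` forces `|t - r| ≤ K`, whence `dist (α t) (β t) ≤ 2 K`.
-/

open Filter

theorem Filter.exists_eventually_sub_lt_and_frequently_lt_add {ι : Type*} {l : Filter ι}
    [l.NeBot] {f : ι → ℝ} (hlo : l.IsBoundedUnder (· ≥ ·) f) (hhi : l.IsBoundedUnder (· ≤ ·) f)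
    {ε : ℝ} (hε : 0 < ε) : ∃ L, (∀ᶠ x in l, L - ε < f x) ∧ ∃ᶠ x in l, f x < L + ε :=
  ⟨liminf f l, eventually_lt_of_lt_liminf (by linarith) hlo,
    frequently_lt_of_liminf_lt hhi.isCoboundedUnder_ge (by linarith)⟩

noncomputable def detour {X : Type*} (G₁ γ G₂ : ℝ → X) (d₁ B u : ℝ) : X :=
  if u ≤ 0 then G₁ (u + d₁) else if u ≤ B then γ u else G₂ (u - B)

section DetourPath

variable {X : Type*} {G₁ γ G₂ : ℝ → X} {d₁ B u : ℝ}

theorem detour_of_nonpos (hu : u ≤ 0) : detour G₁ γ G₂ d₁ B u = G₁ (u + d₁) := if_pos hu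

theorem detour_of_mem_Icc (h₁ : G₁ d₁ = γ 0) (hu : u ∈ Icc 0 B) :
    detour G₁ γ G₂ d₁ B u = γ u := by
  rcases hu.1.eq_or_lt with rfl | hu₀
  · simp [detour, h₁]
  · simp [detour, hu₀.not_ge, hu.2]

theorem detour_of_le (h₁ : G₁ d₁ = γ 0) (h₂ : γ B = G₂ 0) (hB : 0 ≤ B) (hu : B ≤ u) :
    detour G₁ γ G₂ d₁ B u = G₂ (u - B) := by
  rcases hu.eq_or_lt with rfl | huB
  · rw [detour_of_mem_Icc h₁ ⟨hB, le_rfl⟩, h₂, sub_self]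
  · simp [detour, (hB.trans_lt huB).not_ge, huB.not_ge]

end DetourPath

section Geodesics

variable {X : Type*} [MetricSpace X]

def IsGeodesicOn (G : ℝ → X) (s : Set ℝ) : Prop :=
  ∀ u ∈ s, ∀ v ∈ s, dist (G u) (G v) = |u - v|

def IsQuasiGeodesicOn (q : ℝ → X) (lam a s t : ℝ) : Prop :=
  ∀ u ∈ Icc s t, ∀ v ∈ Icc s t,
    (1 / lam) * |u - v| - a ≤ dist (q u) (q v) ∧ dist (q u) (q v) ≤ lam * |u - v| + a

theorem IsGeodesicOn.dist_eq_sub {G : ℝ → X} {s : Set ℝ} (hG : IsGeodesicOn G s) {u v : ℝ}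
    (hu : u ∈ s) (hv : v ∈ s) (huv : u ≤ v) : dist (G u) (G v) = v - u := by
  rw [hG u hu v hv, abs_sub_comm, abs_of_nonneg (sub_nonneg.2 huv)]

theorem IsGeodRay.isGeodesicOn {α : ℝ → X} (hα : IsGeodRay α) : IsGeodesicOn α (Ici 0) := hα

theorem IsGeodRay.dist_zero {α : ℝ → X} (hα : IsGeodRay α) {t : ℝ} (ht : 0 ≤ t) :
    dist (α 0) (α t) = t := by
  simpa using hα.isGeodesicOn.dist_eq_sub self_mem_Ici ht ht

theorem IsGeodRay.isGeodesicOn_shift {β : ℝ → X} (hβ : IsGeodRay β) {t₀ : ℝ} (ht₀ : 0 ≤ t₀)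
    (B : ℝ) : IsGeodesicOn (fun u => β (t₀ + u)) (Icc 0 B) := by
  rintro u ⟨hu, -⟩ v ⟨hv, -⟩
  rw [hβ _ (by simp only [mem_Ici]; linarith) _ (by simp only [mem_Ici]; linarith),
    add_sub_add_left_eq_sub]

theorem IsGeodSeg.exists_isGeodesicOn {s : Set X} {a b : X} (h : IsGeodSeg s a b) :
    ∃ G : ℝ → X, G 0 = a ∧ G (dist a b) = b ∧ IsGeodesicOn G (Icc 0 (dist a b)) := by
  obtain ⟨G, h0, h1, hG, -⟩ := h
  exact ⟨G, h0, h1, hG⟩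

theorem isQuasiGeodesicOn_of_le {q : ℝ → X} {lam a s t : ℝ}
    (h : ∀ u ∈ Icc s t, ∀ v ∈ Icc s t, u ≤ v →
      (1 / lam) * (v - u) - a ≤ dist (q u) (q v) ∧ dist (q u) (q v) ≤ lam * (v - u) + a) :
    IsQuasiGeodesicOn q lam a s t := by
  intro u hu v hv
  rcases le_total u v with huv | hvu
  · rw [abs_sub_comm, abs_of_nonneg (sub_nonneg.2 huv)]
    exact h u hu v hv huv
  · rw [abs_of_nonneg (sub_nonneg.2 hvu), dist_comm]
    exact h v hv u hu hvu

theorem IsGeodRay.dist_le_two_mul {α β : ℝ → X} (hα : IsGeodRay α) (hβ : IsGeodRay β)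
    (h0 : β 0 = α 0) {t r K : ℝ} (ht : 0 ≤ t) (hr : 0 ≤ r) (h : dist (β t) (α r) ≤ K) :
    dist (α t) (β t) ≤ 2 * K := by
  have htr : |t - r| ≤ K := by
    have := abs_dist_sub_le (β t) (α r) (α 0)
    rw [dist_comm (β t), dist_comm (α r), ← h0, hβ.dist_zero ht, h0, hα.dist_zero hr] at this
    exact this.trans h
  calc dist (α t) (β t) ≤ dist (α t) (α r) + dist (α r) (β t) := dist_triangle _ _ _
    _ = |t - r| + dist (β t) (α r) := by rw [hα t ht r hr, dist_comm]
    _ ≤ 2 * K := by linarith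

-- `a` lies on a geodesic of length `d` from `p` to `x`, and `b` is at most `2` closer to `p`
-- than `x` is: then `dist a b ≥ max (v - r) (r - 2)`, which dominates `(r + v) / 3 - 2`.
theorem add_div_three_sub_two_le_dist {a b x p : X} {r v d : ℝ} (hax : dist a x = r)
    (hxb : dist x b = v) (hap : dist a p = d - r) (hbp : d - 2 ≤ dist b p) :
    (r + v) / 3 - 2 ≤ dist a b := by
  linarith [dist_triangle_left x b a, dist_triangle_left b p a]

section Detour

variable {G₁ γ G₂ : ℝ → X} {d₁ d₂ B u v : ℝ}

theorem dist_detour_of_nonpos (hG₁ : IsGeodesicOn G₁ (Icc 0 d₁))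
    (hγ : IsGeodesicOn γ (Icc 0 B)) (hG₂ : IsGeodesicOn G₂ (Icc 0 d₂)) (h₁ : G₁ d₁ = γ 0)
    (h₂ : γ B = G₂ 0) (hfar₁ : ∀ w ∈ Icc 0 B, d₁ - 2 ≤ dist (γ w) (G₁ 0))
    (hB : 2 * (d₁ + d₂) ≤ B) (hu : u ∈ Icc (-d₁) 0) (hv : v ∈ Icc u (B + d₂)) :
    (v - u) / 3 - 2 ≤ dist (detour G₁ γ G₂ d₁ B u) (detour G₁ γ G₂ d₁ B v) ∧
      dist (detour G₁ γ G₂ d₁ B u) (detour G₁ γ G₂ d₁ B v) ≤ v - u := by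
  obtain ⟨hu₁, hu₀⟩ := hu
  obtain ⟨huv, hv₂⟩ := hv
  have hd₁ : 0 ≤ d₁ := by linarith
  have hB₀ : 0 ≤ B := by linarith
  have hua : u + d₁ ∈ Icc 0 d₁ := ⟨by linarith, by linarith⟩
  have hax : dist (G₁ (u + d₁)) (γ 0) = -u := by
    rw [← h₁, hG₁.dist_eq_sub hua (right_mem_Icc.2 hd₁) hua.2]; ring
  have hγ₀ : ∀ w ∈ Icc 0 B, dist (γ 0) (γ w) = w := fun w hw => by
    simpa using hγ.dist_eq_sub (left_mem_Icc.2 hB₀) hw hw.1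
  rw [detour_of_nonpos hu₀]
  rcases le_total v 0 with hv₀ | hv₀
  · rw [detour_of_nonpos hv₀, hG₁.dist_eq_sub hua ⟨by linarith, by linarith⟩ (by linarith)]
    constructor <;> linarith
  rcases le_total v B with hvB | hvB
  · rw [detour_of_mem_Icc h₁ ⟨hv₀, hvB⟩]
    have hap : dist (G₁ (u + d₁)) (G₁ 0) = d₁ - -u := by
      rw [dist_comm, hG₁.dist_eq_sub (left_mem_Icc.2 hd₁) hua hua.1]; ring
    have hlo := add_div_three_sub_two_le_dist hax (hγ₀ v ⟨hv₀, hvB⟩) hap (hfar₁ v ⟨hv₀, hvB⟩)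
    have hhi := dist_triangle (G₁ (u + d₁)) (γ 0) (γ v)
    rw [hax, hγ₀ v ⟨hv₀, hvB⟩] at hhi
    constructor <;> linarith
  · rw [detour_of_le h₁ h₂ hB₀ hvB]
    have hcy : dist (G₂ (v - B)) (γ B) = v - B := by
      rw [h₂, dist_comm, hG₂.dist_eq_sub (left_mem_Icc.2 (by linarith)) ⟨by linarith, by linarith⟩
        (by linarith)]; ring
    have hxy := hγ₀ B (right_mem_Icc.2 hB₀)
    have hhi := dist_triangle4 (G₁ (u + d₁)) (γ 0) (γ B) (G₂ (v - B))
    have hlo := dist_triangle4 (γ 0) (G₁ (u + d₁)) (G₂ (v - B)) (γ B)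
    rw [dist_comm (γ B)] at hhi
    rw [dist_comm (γ 0) (G₁ _)] at hlo
    constructor <;> linarith

theorem dist_detour_of_nonneg (hγ : IsGeodesicOn γ (Icc 0 B))
    (hG₂ : IsGeodesicOn G₂ (Icc 0 d₂)) (h₁ : G₁ d₁ = γ 0) (h₂ : γ B = G₂ 0)
    (hfar₂ : ∀ w ∈ Icc 0 B, d₂ - 2 ≤ dist (γ w) (G₂ d₂)) (hB₀ : 0 ≤ B)
    (hu : u ∈ Icc 0 (B + d₂)) (hv : v ∈ Icc u (B + d₂)) :
    (v - u) / 3 - 2 ≤ dist (detour G₁ γ G₂ d₁ B u) (detour G₁ γ G₂ d₁ B v) ∧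
      dist (detour G₁ γ G₂ d₁ B u) (detour G₁ γ G₂ d₁ B v) ≤ v - u := by
  obtain ⟨hu₀, -⟩ := hu
  obtain ⟨huv, hv₂⟩ := hv
  rcases le_total u B with huB | huB
  · rw [detour_of_mem_Icc h₁ ⟨hu₀, huB⟩]
    rcases le_total v B with hvB | hvB
    · rw [detour_of_mem_Icc h₁ ⟨by linarith, hvB⟩,
        hγ.dist_eq_sub ⟨hu₀, huB⟩ ⟨by linarith, hvB⟩ huv]
      constructor <;> linarith
    rw [detour_of_le h₁ h₂ hB₀ hvB]
    have hvc : v - B ∈ Icc 0 d₂ := ⟨by linarith, by linarith⟩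
    have hcy : dist (G₂ (v - B)) (γ B) = v - B := by
      rw [h₂, dist_comm, hG₂.dist_eq_sub (left_mem_Icc.2 (by linarith)) hvc hvc.1]; ring
    have hyu : dist (γ u) (γ B) = B - u := hγ.dist_eq_sub ⟨hu₀, huB⟩ (right_mem_Icc.2 hB₀) huB
    have hcp : dist (G₂ (v - B)) (G₂ d₂) = d₂ - (v - B) :=
      hG₂.dist_eq_sub hvc (right_mem_Icc.2 (by linarith)) hvc.2
    have hlo := add_div_three_sub_two_le_dist hcy (by rw [dist_comm, hyu]) hcp
      (hfar₂ u ⟨hu₀, huB⟩)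
    have hhi := dist_triangle (γ u) (γ B) (G₂ (v - B))
    rw [dist_comm (G₂ _)] at hlo hcy
    rw [hyu, hcy] at hhi
    constructor <;> linarith
  · rw [detour_of_le h₁ h₂ hB₀ huB, detour_of_le h₁ h₂ hB₀ (huB.trans huv),
      hG₂.dist_eq_sub ⟨by linarith, by linarith⟩ ⟨by linarith, by linarith⟩ (by linarith)]
    constructor <;> linarith

theorem isQuasiGeodesicOn_detour (hG₁ : IsGeodesicOn G₁ (Icc 0 d₁))
    (hγ : IsGeodesicOn γ (Icc 0 B)) (hG₂ : IsGeodesicOn G₂ (Icc 0 d₂)) (h₁ : G₁ d₁ = γ 0)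
    (h₂ : γ B = G₂ 0) (hfar₁ : ∀ w ∈ Icc 0 B, d₁ - 2 ≤ dist (γ w) (G₁ 0))
    (hfar₂ : ∀ w ∈ Icc 0 B, d₂ - 2 ≤ dist (γ w) (G₂ d₂)) (hB : 2 * (d₁ + d₂) ≤ B) :
    IsQuasiGeodesicOn (detour G₁ γ G₂ d₁ B) 3 2 (-d₁) (B + d₂) := by
  refine isQuasiGeodesicOn_of_le fun u hu v hv huv => ?_
  obtain ⟨hlo, hhi⟩ : (v - u) / 3 - 2 ≤ dist (detour G₁ γ G₂ d₁ B u) (detour G₁ γ G₂ d₁ B v) ∧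
      dist (detour G₁ γ G₂ d₁ B u) (detour G₁ γ G₂ d₁ B v) ≤ v - u := by
    rcases le_total u 0 with hu₀ | hu₀
    · exact dist_detour_of_nonpos hG₁ hγ hG₂ h₁ h₂ hfar₁ hB ⟨hu.1, hu₀⟩ ⟨huv, hv.2⟩
    · exact dist_detour_of_nonneg hγ hG₂ h₁ h₂ hfar₂ (by linarith [hu.1, hu.2]) ⟨hu₀, hu.2⟩ ⟨huv, hv.2⟩
  constructor <;> linarith

end Detour

theorem IsMorseRay.infDist_le_of_detour {M : ℝ → ℝ → ℝ} {α β : ℝ → X}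
    (hgeo : ∀ a b : X, ∃ s : Set X, IsGeodSeg s a b) (hα : IsMorseRay M α) (hβ : IsGeodRay β)
    {t₁ t₂ : ℝ} (ht₁ : 0 ≤ t₁) {p₁ p₂ : X} (hp₁ : p₁ ∈ α '' Ici 0) (hp₂ : p₂ ∈ α '' Ici 0)
    (hB : 2 * (dist p₁ (β t₁) + dist (β t₂) p₂) ≤ t₂ - t₁)
    (hfar₁ : ∀ u ∈ Icc t₁ t₂, dist p₁ (β t₁) - 2 ≤ dist (β u) p₁)
    (hfar₂ : ∀ u ∈ Icc t₁ t₂, dist (β t₂) p₂ - 2 ≤ dist (β u) p₂) :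
    infDist (β t₁) (α '' Ici 0) ≤ M 3 2 := by
  obtain ⟨s₁, hs₁⟩ := hgeo p₁ (β t₁)
  obtain ⟨s₂, hs₂⟩ := hgeo (β t₂) p₂
  obtain ⟨G₁, hG₁0, hG₁1, hG₁⟩ := hs₁.exists_isGeodesicOn
  obtain ⟨G₂, hG₂0, hG₂1, hG₂⟩ := hs₂.exists_isGeodesicOn
  have hd₁ : 0 ≤ dist p₁ (β t₁) := dist_nonneg
  have hd₂ : 0 ≤ dist (β t₂) p₂ := dist_nonneg
  set γ : ℝ → X := fun u => β (t₁ + u)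
  have h₁ : G₁ (dist p₁ (β t₁)) = γ 0 := by simp only [γ, hG₁1, add_zero]
  have h₂ : γ (t₂ - t₁) = G₂ 0 := by simp only [γ, hG₂0, add_sub_cancel]
  have hq := isQuasiGeodesicOn_detour hG₁ (hβ.isGeodesicOn_shift ht₁ (t₂ - t₁)) hG₂ h₁ h₂
    (fun u hu => by rw [hG₁0]; exact hfar₁ (t₁ + u) ⟨by linarith [hu.1], by linarith [hu.2]⟩)
    (fun u hu => by rw [hG₂1]; exact hfar₂ (t₁ + u) ⟨by linarith [hu.1], by linarith [hu.2]⟩)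
    hB
  obtain ⟨p, hp, hdist⟩ := hα 3 2 (by norm_num) (by norm_num) _ _ _ (by linarith) hq
    (by rwa [detour_of_nonpos (neg_nonpos.2 hd₁), neg_add_cancel, hG₁0])
    (by rwa [detour_of_le h₁ h₂ (by linarith) (le_add_of_nonneg_right hd₂), add_sub_cancel_left,
      hG₂1]) 0 ⟨by linarith, by linarith⟩
  rw [detour_of_nonpos le_rfl, zero_add, hG₁1] at hdist
  exact (infDist_le_dist_of_mem hp).trans hdist

theorem IsMorseRay.lt_of_eventually_frequently {M : ℝ → ℝ → ℝ} {α β : ℝ → X}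
    (hgeo : ∀ a b : X, ∃ s : Set X, IsGeodSeg s a b) (hα : IsMorseRay M α) (hβ : IsGeodRay β)
    {L : ℝ} (hev : ∀ᶠ s in atTop, L - 1 < infDist (β s) (α '' Ici 0))
    (hfreq : ∃ᶠ s in atTop, infDist (β s) (α '' Ici 0) < L + 1) : L - 1 < M 3 2 := by
  have hA : (α '' Ici 0).Nonempty := ⟨α 0, mem_image_of_mem α self_mem_Ici⟩
  obtain ⟨T, hT⟩ := eventually_atTop.1 hev
  obtain ⟨t₁, ht₁, hft₁⟩ := frequently_atTop.1 hfreq (max T 0)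
  obtain ⟨t₂, ht₂, hft₂⟩ := frequently_atTop.1 hfreq (t₁ + 4 * (L + 1))
  obtain ⟨p₁, hp₁, hd₁⟩ := (infDist_lt_iff hA).1 hft₁
  obtain ⟨p₂, hp₂, hd₂⟩ := (infDist_lt_iff hA).1 hft₂
  rw [dist_comm] at hd₁
  have hfar : ∀ u, t₁ ≤ u → ∀ p ∈ α '' Ici 0, L - 1 < dist (β u) p := fun u hu p hp =>
    (hT u ((le_max_left T 0).trans (ht₁.trans hu))).trans_le (infDist_le_dist_of_mem hp)
  have hnear := hα.infDist_le_of_detour hgeo hβ (t₂ := t₂) (le_of_max_le_right ht₁) hp₁ hp₂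
    (by linarith) (fun u hu => by linarith [hfar u hu.1 p₁ hp₁])
    (fun u hu => by linarith [hfar u hu.1 p₂ hp₂])
  linarith [hT t₁ (le_of_max_le_left ht₁)]

theorem IsMorseRay.exists_dist_le_of_dist_le {M : ℝ → ℝ → ℝ} {α β : ℝ → X}
    (hα : IsMorseRay M α) (hβ : IsGeodRay β) (h0 : β 0 ∈ α '' Ici 0) {s c : ℝ} {p : X}
    (hp : p ∈ α '' Ici 0) (hc : dist (β s) p ≤ c) {u : ℝ} (hu : u ∈ Ico 0 s) :
    ∃ p' ∈ α '' Ici 0, dist (β u) p' ≤ M 1 c := by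
  have hc₀ : 0 ≤ c := dist_nonneg.trans hc
  have hq : IsQuasiGeodesicOn (Function.update β s p) 1 c 0 s := by
    refine isQuasiGeodesicOn_of_le fun x hx y hy hxy => ?_
    rcases hy.2.lt_or_eq with hys | rfl
    · rw [Function.update_of_ne (hxy.trans_lt hys).ne, Function.update_of_ne hys.ne,
        hβ.isGeodesicOn.dist_eq_sub hx.1 hy.1 hxy]
      constructor <;> linarith
    rcases hxy.lt_or_eq with hxy | rfl
    · rw [Function.update_of_ne hxy.ne, Function.update_self]
      have hxy' := hβ.isGeodesicOn.dist_eq_sub hx.1 hy.1 hxy.le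
      have := dist_triangle (β x) (β y) p
      have := dist_triangle_right (β x) (β y) p
      constructor <;> linarith
    · simp only [Function.update_self, dist_self, sub_self]
      constructor <;> linarith
  obtain ⟨p', hp', hdist⟩ := hα 1 c le_rfl hc₀ _ 0 s (hu.1.trans hu.2.le) hq
    (by rwa [Function.update_of_ne (hu.1.trans_lt hu.2).ne]) (by rwa [Function.update_self])
    u (mem_Icc_of_Ico hu)
  rw [Function.update_of_ne hu.2.ne] at hdist
  exact ⟨p', hp', hdist⟩

end Geodesics

theorem stmt17_general {X : Type*} [MetricSpace X]
    (hgeo : ∀ a b : X, ∃ s : Set X, IsGeodSeg s a b) (M : ℝ → ℝ → ℝ) :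
    ∃ δM : ℝ, ∀ α β : ℝ → X, IsGeodRay α → IsGeodRay β → β 0 = α 0 → IsMorseRay M α →
      (∃ C : ℝ, (∀ t ∈ Set.Ici (0 : ℝ), ∃ s ∈ Set.Ici (0 : ℝ), dist (α t) (β s) ≤ C) ∧
        (∀ s ∈ Set.Ici (0 : ℝ), ∃ t ∈ Set.Ici (0 : ℝ), dist (β s) (α t) ≤ C)) →
      ∀ t ∈ Set.Ici (0 : ℝ), dist (α t) (β t) ≤ δM := by
  refine ⟨2 * M 1 (M 3 2 + 2), ?_⟩
  rintro α β hα hβ hβ0 hMo ⟨C, -, hCβ⟩ t ht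
  have hα0 : α 0 ∈ α '' Ici 0 := mem_image_of_mem α self_mem_Ici
  have hbdd : ∀ᶠ s in atTop, infDist (β s) (α '' Ici 0) ≤ C :=
    (eventually_ge_atTop 0).mono fun s hs => by
      obtain ⟨r, hr, hsr⟩ := hCβ s hs
      exact (infDist_le_dist_of_mem (mem_image_of_mem α hr)).trans hsr
  obtain ⟨L, hev, hfreq⟩ := exists_eventually_sub_lt_and_frequently_lt_add
    (isBoundedUnder_of_eventually_ge (.of_forall fun _ => infDist_nonneg))
    (isBoundedUnder_of_eventually_le hbdd) one_pos
  have hL := hMo.lt_of_eventually_frequently hgeo hβ hev hfreq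
  obtain ⟨s, hs, hts⟩ := (hfreq.and_eventually (eventually_gt_atTop t)).exists
  obtain ⟨p, hp, hsp⟩ := (infDist_lt_iff ⟨_, hα0⟩).1 hs
  obtain ⟨_, ⟨r, hr, rfl⟩, htr⟩ :=
    hMo.exists_dist_le_of_dist_le hβ (hβ0 ▸ hα0) hp (c := M 3 2 + 2) (by linarith) ⟨ht, hts⟩
  exact hα.dist_le_two_mul hβ hβ0 ht hr htr

/-- Cordes's key lemma: in a proper geodesic metric space, for every Morse gauge
`M` there is `δ_M` such that any geodesic ray `β` starting at the same point as an `M`-Morse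
geodesic ray `α` and at finite Hausdorff distance from it satisfies
`dist (α t) (β t) ≤ δ_M` for all `t ≥ 0`. -/
theorem stmt17 {X : Type*} [MetricSpace X] [ProperSpace X]
    (hgeo : ∀ a b : X, ∃ s : Set X, IsGeodSeg s a b) (M : ℝ → ℝ → ℝ) :
    ∃ δM : ℝ, ∀ α β : ℝ → X, IsGeodRay α → IsGeodRay β → β 0 = α 0 → IsMorseRay M α →
      (∃ C : ℝ, (∀ t ∈ Set.Ici (0 : ℝ), ∃ s ∈ Set.Ici (0 : ℝ), dist (α t) (β s) ≤ C) ∧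
        (∀ s ∈ Set.Ici (0 : ℝ), ∃ t ∈ Set.Ici (0 : ℝ), dist (β s) (α t) ≤ C)) →
      ∀ t ∈ Set.Ici (0 : ℝ), dist (α t) (β t) ≤ δM :=
  stmt17_general hgeo M
end
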